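/- Let ν be a normal weight on [0,1) and let f(z) = ∑_{n≥0} a_n z^n be analytic on the unit disk with (a_n) nonnegative and non-increasing. Then f ∈ B_ν if and only if sup_{n≥1} n² ν(1-1/n) a_n < ∞, and ‖f‖_{B_ν} is comparable to a_0 + sup_{n≥1} n² ν(1-1/n) a_n. -/

import Mathlib

open MeasureTheory Set Filter

/-- `g` is almost decreasing on `s`. -/
def AlmostDecreasingOn (g : ℝ → ℝ) (s : Set ℝ) : Prop :=
  ∃ C > 0, ∀ x ∈ s, ∀ y ∈ s, x < y → g y ≤ C * g x

/-- `g` is almost increasing on `s`. -/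
def AlmostIncreasingOn (g : ℝ → ℝ) (s : Set ℝ) : Prop :=
  ∃ C > 0, ∀ x ∈ s, ∀ y ∈ s, x < y → g x ≤ C * g y

/-- `ν` is a normal weight on `[0,1)` with exponents `a ≤ b`. -/
def IsNormal (ν : ℝ → ℝ) (a b : ℝ) : Prop :=
  0 < a ∧ a ≤ b ∧ (∀ s ∈ Ico (0:ℝ) 1, 0 < ν s) ∧ ContinuousOn ν (Ico 0 1) ∧
  AlmostDecreasingOn (fun s => ν s / (1 - s ^ 2) ^ a) (Ico 0 1) ∧
  AlmostIncreasingOn (fun s => ν s / (1 - s ^ 2) ^ b) (Ico 0 1)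

/-- Membership in the normal-weight Bloch space `B_ν`. -/
def MemBloch (ν : ℝ → ℝ) (f : ℂ → ℂ) : Prop :=
  DifferentiableOn ℂ f (Metric.ball 0 1) ∧
  BddAbove (Set.range fun z : Metric.ball (0:ℂ) 1 => ν ‖(z : ℂ)‖ * ‖deriv f z‖)

/-- The Bloch norm `|f(0)| + sup ν(|z|)|f'(z)|`. -/
noncomputable def blochNorm (ν : ℝ → ℝ) (f : ℂ → ℂ) : ℝ :=
  ‖f 0‖ + ⨆ z : Metric.ball (0:ℂ) 1, ν ‖(z : ℂ)‖ * ‖deriv f z‖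

/-- `ω̃(t) = ∫_0^t ds/ω(s)`. -/
noncomputable def tildeW (ω : ℝ → ℝ) (t : ℝ) : ℝ := ∫ s in (0:ℝ)..t, 1 / ω s

/-- The generalized integral type Hilbert operator `I_{μ,α+1}`. -/
noncomputable def intHilbert (μ : Measure ℝ) (α : ℝ) (f : ℂ → ℂ) (z : ℂ) : ℂ :=
  ∫ t in Ico (0:ℝ) 1, f (t : ℂ) / (1 - (t : ℂ) * z) ^ ((α : ℂ) + 1) ∂μ

/-- The sublinear generalized integral type Hilbert operator. -/
noncomputable def tildeIntHilbert (μ : Measure ℝ) (α : ℝ) (f : ℂ → ℂ) (z : ℂ) : ℂ :=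
  ∫ t in Ico (0:ℝ) 1, (‖f (t : ℂ)‖ : ℂ) / (1 - (t : ℂ) * z) ^ ((α : ℂ) + 1) ∂μ

/-- Boundedness of an operator from `B_{ν₁}` to `B_{ν₂}`. -/
def IsBddOp (ν₁ ν₂ : ℝ → ℝ) (T : (ℂ → ℂ) → ℂ → ℂ) : Prop :=
  ∃ C > 0, ∀ f, MemBloch ν₁ f → MemBloch ν₂ (T f) ∧ blochNorm ν₂ (T f) ≤ C * blochNorm ν₁ f

/-- Compactness of an operator from `B_{ν₁}` to `B_{ν₂}` (sequential characterization). -/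
def IsCompactOp (ν₁ ν₂ : ℝ → ℝ) (T : (ℂ → ℂ) → ℂ → ℂ) : Prop :=
  IsBddOp ν₁ ν₂ T ∧
  ∀ (h : ℕ → ℂ → ℂ) (M : ℝ), (∀ k, MemBloch ν₁ (h k) ∧ blochNorm ν₁ (h k) ≤ M) →
    TendstoLocallyUniformlyOn (fun k z => h k z) (fun _ => 0) atTop (Metric.ball (0:ℂ) 1) →
    Tendsto (fun k => blochNorm ν₂ (T (h k))) atTop (nhds 0)

/-!
Write `ρₖ = 1 - 1/(k+1)` and `wₖ = (k+1)² ν(ρₖ) c_{k+1}`. The derivative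
`f'(z) = ∑ (n+1) c_{n+1} zⁿ` has nonnegative coefficients, so `|f'(z)| ≤ f'(|z|)` and the Bloch
seminorm is governed by `f'` on `[0,1)`.

Lower bound: as `c` decreases, `f'(ρₖ) ≥ c_{k+1} ρₖᵏ ∑_{n ≤ k} (n+1)`, and `ρₖᵏ ≥ 1/e`, so
`wₖ ≤ 6 ν(ρₖ) f'(ρₖ)`.

Upper bound: `ν(ρ) f'(ρ) ≤ (sup w) ∑ₙ ν(ρ)/ν(ρₙ) · ρⁿ/(n+1)`. Normality bounds `ν(ρ)/ν(ρₙ)` by a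
constant times `((1-ρ)(n+1))^a` when `ρₙ ≤ ρ` and `((1-ρ)(n+1))^b` when `ρₙ ≥ ρ`. The first range is
`n < 1/(1-ρ)`, where, after lowering `a` to `min a 1`, concavity of `t ↦ t^a` gives
`∑_{n < N} (n+1)^(a-1) ≤ N^a / a`; on the second, with an integer `m ≥ b`, the sum is dominated by
`(1-ρ)^(m+1) ∑ (n+1)^m ρⁿ ≤ m!`.
-/

lemma rpow_sub_one_le_rpow_sub_rpow {a u : ℝ} (ha : 0 < a) (ha1 : a ≤ 1) (hu : 1 ≤ u) :
    a * u ^ (a - 1) ≤ u ^ a - (u - 1) ^ a := by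
  have hu0 : 0 < u := by linarith
  have hbern := rpow_one_add_le_one_add_mul_self (s := -u⁻¹)
    (by linarith [inv_le_one_of_one_le₀ hu]) ha.le ha1
  have hsplit : (u - 1) ^ a = u ^ a * (1 + -u⁻¹) ^ a := by
    rw [← Real.mul_rpow hu0.le (by linarith [inv_le_one_of_one_le₀ hu])]
    congr 1
    field_simp
    ring
  have hua := Real.rpow_pos_of_pos hu0 a
  rw [hsplit, Real.rpow_sub_one hu0.ne']
  calc a * (u ^ a / u) = u ^ a - u ^ a * (1 + a * -u⁻¹) := by field_simp; ring
    _ ≤ u ^ a - u ^ a * (1 + -u⁻¹) ^ a := by gcongr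

lemma sum_range_rpow_sub_one_le {a : ℝ} (ha : 0 < a) (ha1 : a ≤ 1) (N : ℕ) :
    ∑ k ∈ Finset.range N, ((k : ℝ) + 1) ^ (a - 1) ≤ (N : ℝ) ^ a / a := by
  induction N with
  | zero => simp [Real.zero_rpow ha.ne']
  | succ N ih =>
    have hstep := rpow_sub_one_le_rpow_sub_rpow ha ha1 (le_add_of_nonneg_left N.cast_nonneg)
    rw [add_sub_cancel_right] at hstep
    rw [le_div_iff₀ ha] at ih ⊢
    rw [Finset.sum_range_succ, Nat.cast_succ]
    nlinarith

lemma rpow_mul_sum_range_floor_le {a δ : ℝ} (ha : 0 < a) (ha1 : a ≤ 1) (hδ : 0 < δ) :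
    δ ^ a * ∑ n ∈ Finset.range ⌊1 / δ⌋₊, ((n : ℝ) + 1) ^ (a - 1) ≤ 1 / a := by
  have hN : δ * ⌊1 / δ⌋₊ ≤ 1 := by
    rw [← le_div_iff₀' hδ]
    exact Nat.floor_le (by positivity)
  calc δ ^ a * ∑ n ∈ Finset.range ⌊1 / δ⌋₊, ((n : ℝ) + 1) ^ (a - 1)
      ≤ δ ^ a * ((⌊1 / δ⌋₊ : ℝ) ^ a / a) := by
        gcongr
        exact sum_range_rpow_sub_one_le ha ha1 _
    _ = (δ * ⌊1 / δ⌋₊) ^ a / a := by rw [Real.mul_rpow hδ.le (Nat.cast_nonneg _), mul_div_assoc]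
    _ ≤ 1 / a := by
        gcongr
        exact Real.rpow_le_one (by positivity) hN ha.le

lemma lt_floor_one_div_iff {δ : ℝ} (hδ : 0 < δ) (n : ℕ) :
    n < ⌊1 / δ⌋₊ ↔ δ * ((n : ℝ) + 1) ≤ 1 := by
  rw [Nat.lt_iff_add_one_le, Nat.le_floor_iff (by positivity), le_div_iff₀ hδ, mul_comm]
  push_cast
  rfl

lemma one_sub_inv_add_one_mem_Ico (n : ℕ) : 1 - 1 / ((n : ℝ) + 1) ∈ Ico (0 : ℝ) 1 := by
  have hn : (0 : ℝ) < (n : ℝ) + 1 := by positivity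
  have hle : 1 / ((n : ℝ) + 1) ≤ 1 := (div_le_one hn).2 (by linarith [n.cast_nonneg (α := ℝ)])
  exact ⟨by linarith, by linarith [one_div_pos.2 hn]⟩

lemma tsum_add_one_pow_mul_geometric_le {r : ℝ} (hr0 : 0 ≤ r) (hr1 : r < 1) (m : ℕ) :
    Summable (fun n : ℕ => ((n : ℝ) + 1) ^ m * r ^ n) ∧
      ∑' n : ℕ, ((n : ℝ) + 1) ^ m * r ^ n ≤ m.factorial / (1 - r) ^ (m + 1) := by
  have hnorm : ‖r‖ < 1 := by rwa [Real.norm_of_nonneg hr0]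
  have hchoose := (hasSum_choose_mul_geometric_of_norm_lt_one m hnorm).mul_left (m.factorial : ℝ)
  have hle : ∀ n : ℕ, ((n : ℝ) + 1) ^ m * r ^ n ≤
      m.factorial * (((n + m).choose m : ℕ) * r ^ n) := by
    intro n
    rw [← mul_assoc]
    gcongr
    have := (Nat.pow_succ_le_ascFactorial (n + 1) m).trans_eq
      (Nat.ascFactorial_eq_factorial_mul_choose n m)
    exact_mod_cast this
  have hsum := hchoose.summable.of_nonneg_of_le (fun n => by positivity) hle
  refine ⟨hsum, (hsum.tsum_le_tsum hle hchoose.summable).trans_eq ?_⟩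
  rw [hchoose.tsum_eq, mul_one_div]

lemma inv_three_le_one_sub_inv_pow (k : ℕ) : 1 / 3 ≤ (1 - 1 / ((k : ℝ) + 1)) ^ k := by
  have hprod : (1 - 1 / ((k : ℝ) + 1)) ^ k * (1 + (k : ℝ)⁻¹) ^ k = 1 := by
    rcases k.eq_zero_or_pos with rfl | hk
    · simp
    · have hk' : (k : ℝ) ≠ 0 := by positivity
      rw [← mul_pow, show (1 - 1 / ((k : ℝ) + 1)) * (1 + (k : ℝ)⁻¹) = 1 by field_simp; ring,
        one_pow]
  have he := Real.one_add_inv_pow_le_exp (n := k)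
  have h3 := Real.exp_one_lt_d9
  have hpos : 0 < (1 + (k : ℝ)⁻¹) ^ k := by positivity
  nlinarith

lemma one_sub_sq_div_one_sub_sq_le {x y : ℝ} (hx : x ∈ Ico (0 : ℝ) 1) (hy : y ∈ Ico (0 : ℝ) 1) :
    (1 - x ^ 2) / (1 - y ^ 2) ≤ 2 * ((1 - x) / (1 - y)) := by
  obtain ⟨hx0, hx1⟩ := hx
  obtain ⟨hy0, hy1⟩ := hy
  have hy' : 0 < 1 - y := by linarith
  rw [div_le_iff₀ (by nlinarith),
    show 2 * ((1 - x) / (1 - y)) * (1 - y ^ 2) = 2 * (1 - x) * (1 + y) by field_simp; ring]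
  nlinarith

lemma AlmostDecreasingOn.exists_le_of_le {g : ℝ → ℝ} {s : Set ℝ} (h : AlmostDecreasingOn g s)
    (hg : ∀ x ∈ s, 0 ≤ g x) : ∃ C > 0, ∀ x ∈ s, ∀ y ∈ s, x ≤ y → g y ≤ C * g x := by
  obtain ⟨C, hC, hle⟩ := h
  refine ⟨max C 1, by positivity, fun x hx y hy hxy => ?_⟩
  rcases hxy.lt_or_eq with hlt | rfl
  · exact (hle x hx y hy hlt).trans (by gcongr; exacts [hg x hx, le_max_left _ _])
  · exact le_mul_of_one_le_left (hg x hx) (le_max_right _ _)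

lemma AlmostIncreasingOn.exists_le_of_le {g : ℝ → ℝ} {s : Set ℝ} (h : AlmostIncreasingOn g s)
    (hg : ∀ x ∈ s, 0 ≤ g x) : ∃ C > 0, ∀ x ∈ s, ∀ y ∈ s, x ≤ y → g x ≤ C * g y := by
  obtain ⟨C, hC, hle⟩ := h
  refine ⟨max C 1, by positivity, fun x hx y hy hxy => ?_⟩
  rcases hxy.lt_or_eq with hlt | rfl
  · exact (hle x hx y hy hlt).trans (by gcongr; exacts [hg y hy, le_max_left _ _])
  · exact le_mul_of_one_le_left (hg x hx) (le_max_right _ _)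

lemma le_mul_mul_div_rpow_of_div_rpow_le {u v p q C e : ℝ} (hp : 0 < p) (hq : 0 < q)
    (h : u / p ^ e ≤ C * (v / q ^ e)) : u ≤ C * v * (p / q) ^ e := by
  have hpe := Real.rpow_pos_of_pos hp e
  have hqe := Real.rpow_pos_of_pos hq e
  rw [div_le_iff₀ hpe] at h
  rw [Real.div_rpow hp.le hq.le]
  calc u ≤ C * (v / q ^ e) * p ^ e := h
    _ = C * v * (p ^ e / q ^ e) := by ring

theorem IsNormal.exists_le_mul_rpow {ν : ℝ → ℝ} {a b : ℝ} (hν : IsNormal ν a b) :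
    ∃ C > 0, ∀ x ∈ Ico (0 : ℝ) 1, ∀ y ∈ Ico (0 : ℝ) 1,
      (y ≤ x → ν x ≤ C * ν y * ((1 - x ^ 2) / (1 - y ^ 2)) ^ a) ∧
      (x ≤ y → ν x ≤ C * ν y * ((1 - x ^ 2) / (1 - y ^ 2)) ^ b) := by
  obtain ⟨-, -, hpos, -, hdec, hinc⟩ := hν
  have hw : ∀ x ∈ Ico (0 : ℝ) 1, 0 < 1 - x ^ 2 := fun x hx => by
    obtain ⟨hx0, hx1⟩ := hx
    nlinarith
  have hg : ∀ e : ℝ, ∀ x ∈ Ico (0 : ℝ) 1, 0 ≤ ν x / (1 - x ^ 2) ^ e := fun e x hx =>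
    div_nonneg (hpos x hx).le (Real.rpow_nonneg (hw x hx).le e)
  obtain ⟨C₁, hC₁, hD⟩ := hdec.exists_le_of_le (hg a)
  obtain ⟨C₂, hC₂, hI⟩ := hinc.exists_le_of_le (hg b)
  refine ⟨max C₁ C₂, by positivity, fun x hx y hy => ?_⟩
  have hνy := hpos y hy
  have ht : 0 ≤ (1 - x ^ 2) / (1 - y ^ 2) := div_nonneg (hw x hx).le (hw y hy).le
  refine ⟨fun hyx => ?_, fun hxy => ?_⟩
  · refine (le_mul_mul_div_rpow_of_div_rpow_le (hw x hx) (hw y hy) (hD y hy x hx hyx)).trans ?_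
    exact mul_le_mul_of_nonneg_right (mul_le_mul_of_nonneg_right (le_max_left C₁ C₂) hνy.le)
      (Real.rpow_nonneg ht a)
  · refine (le_mul_mul_div_rpow_of_div_rpow_le (hw x hx) (hw y hy) (hI x hx y hy hxy)).trans ?_
    exact mul_le_mul_of_nonneg_right (mul_le_mul_of_nonneg_right (le_max_right C₁ C₂) hνy.le)
      (Real.rpow_nonneg ht b)

theorem IsNormal.exists_div_le_rpow {ν : ℝ → ℝ} {a b : ℝ} (hν : IsNormal ν a b) :
    ∃ C > 0, ∀ ρ ∈ Ico (0 : ℝ) 1, ∀ n : ℕ,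
      ((1 - ρ) * ((n : ℝ) + 1) ≤ 1 →
        ν ρ / ν (1 - 1 / ((n : ℝ) + 1)) ≤ C * (2 * ((1 - ρ) * ((n : ℝ) + 1))) ^ a) ∧
      (1 ≤ (1 - ρ) * ((n : ℝ) + 1) →
        ν ρ / ν (1 - 1 / ((n : ℝ) + 1)) ≤ C * (2 * ((1 - ρ) * ((n : ℝ) + 1))) ^ b) := by
  obtain ⟨C, hC, hcmp⟩ := hν.exists_le_mul_rpow
  refine ⟨C, hC, fun ρ hρ n => ?_⟩
  have hs := one_sub_inv_add_one_mem_Ico n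
  set s := 1 - 1 / ((n : ℝ) + 1) with hs_def
  have hνs : 0 < ν s := hν.2.2.1 s hs
  have hn : (0 : ℝ) < (n : ℝ) + 1 := by positivity
  have hratio : (1 - ρ ^ 2) / (1 - s ^ 2) ≤ 2 * ((1 - ρ) * ((n : ℝ) + 1)) := by
    convert one_sub_sq_div_one_sub_sq_le hρ hs using 2
    rw [hs_def]
    field_simp
    ring
  have hratio0 : 0 ≤ (1 - ρ ^ 2) / (1 - s ^ 2) :=
    div_nonneg (by nlinarith [hρ.1, hρ.2]) (by nlinarith [hs.1, hs.2])
  have hsρ : s ≤ ρ ↔ (1 - ρ) * ((n : ℝ) + 1) ≤ 1 := by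
    rw [hs_def, ← le_div_iff₀ hn]
    constructor <;> intro h <;> linarith
  have ha : 0 ≤ a := hν.1.le
  have hb : 0 ≤ b := hν.1.le.trans hν.2.1
  constructor
  · intro hx
    rw [div_le_iff₀ hνs]
    calc ν ρ ≤ C * ν s * ((1 - ρ ^ 2) / (1 - s ^ 2)) ^ a := ((hcmp ρ hρ s hs).1 (hsρ.2 hx))
      _ ≤ C * ν s * (2 * ((1 - ρ) * ((n : ℝ) + 1))) ^ a := by gcongr
      _ = C * (2 * ((1 - ρ) * ((n : ℝ) + 1))) ^ a * ν s := by ring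
  · intro hx
    have hρs : ρ ≤ s := by
      rw [hs_def, le_sub_comm, div_le_iff₀ hn]
      linarith
    rw [div_le_iff₀ hνs]
    calc ν ρ ≤ C * ν s * ((1 - ρ ^ 2) / (1 - s ^ 2)) ^ b := ((hcmp ρ hρ s hs).2 hρs)
      _ ≤ C * ν s * (2 * ((1 - ρ) * ((n : ℝ) + 1))) ^ b := by gcongr
      _ = C * (2 * ((1 - ρ) * ((n : ℝ) + 1))) ^ b * ν s := by ring

noncomputable def normalKernel (ν : ℝ → ℝ) (ρ : ℝ) (n : ℕ) : ℝ :=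
  ν ρ / ν (1 - 1 / ((n : ℝ) + 1)) * ρ ^ n / ((n : ℝ) + 1)

lemma normalKernel_nonneg {ν : ℝ → ℝ} (hν : ∀ s ∈ Ico (0 : ℝ) 1, 0 < ν s) {ρ : ℝ}
    (hρ : ρ ∈ Ico (0 : ℝ) 1) (n : ℕ) : 0 ≤ normalKernel ν ρ n :=
  div_nonneg (mul_nonneg (div_nonneg (hν ρ hρ).le (hν _ (one_sub_inv_add_one_mem_Ico n)).le)
    (pow_nonneg hρ.1 n)) (by positivity)

theorem IsNormal.exists_normalKernel_le {ν : ℝ → ℝ} {a b : ℝ} (hν : IsNormal ν a b) {a' : ℝ}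
    (ha' : a' ≤ a) {m : ℕ} (hm : b ≤ m + 1) :
    ∃ C > 0, ∀ ρ ∈ Ico (0 : ℝ) 1, ∀ n : ℕ,
      normalKernel ν ρ n ≤
        (if n < ⌊1 / (1 - ρ)⌋₊ then C * 2 ^ a * ((1 - ρ) ^ a' * ((n : ℝ) + 1) ^ (a' - 1))
          else 0) + C * 2 ^ (m + 1) * ((1 - ρ) ^ (m + 1) * (((n : ℝ) + 1) ^ m * ρ ^ n)) := by
  obtain ⟨C, hC, hdiv⟩ := hν.exists_div_le_rpow
  refine ⟨C, hC, fun ρ hρ n => ?_⟩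
  rw [normalKernel]
  have hn : (0 : ℝ) < (n : ℝ) + 1 := by positivity
  have hρ1 : 0 < 1 - ρ := by linarith [hρ.2]
  have hx : 0 < (1 - ρ) * ((n : ℝ) + 1) := by positivity
  have hρn : ρ ^ n ≤ 1 := pow_le_one₀ hρ.1 hρ.2.le
  have hρn0 : 0 ≤ ρ ^ n := pow_nonneg hρ.1 n
  split_ifs with hN
  · have hx1 := (lt_floor_one_div_iff hρ1 n).1 hN
    have hpow : (2 * ((1 - ρ) * ((n : ℝ) + 1))) ^ a ≤
        2 ^ a * ((1 - ρ) ^ a' * ((n : ℝ) + 1) ^ a') := by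
      rw [Real.mul_rpow zero_le_two hx.le, ← Real.mul_rpow hρ1.le hn.le]
      exact mul_le_mul_of_nonneg_left (Real.rpow_le_rpow_of_exponent_ge hx hx1 ha') (by positivity)
    calc ν ρ / ν (1 - 1 / ((n : ℝ) + 1)) * ρ ^ n / ((n : ℝ) + 1)
        ≤ C * (2 ^ a * ((1 - ρ) ^ a' * ((n : ℝ) + 1) ^ a')) * 1 / ((n : ℝ) + 1) := by
          gcongr
          exact ((hdiv ρ hρ n).1 hx1).trans (by gcongr)
      _ = C * 2 ^ a * ((1 - ρ) ^ a' * ((n : ℝ) + 1) ^ (a' - 1)) := by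
          rw [Real.rpow_sub_one hn.ne']
          ring
      _ ≤ _ := le_add_of_nonneg_right <|
          mul_nonneg (by positivity) (mul_nonneg (pow_nonneg hρ1.le _) (by positivity))
  · have hx1 : 1 ≤ (1 - ρ) * ((n : ℝ) + 1) := (not_le.1 (mt (lt_floor_one_div_iff hρ1 n).2 hN)).le
    have hpow : (2 * ((1 - ρ) * ((n : ℝ) + 1))) ^ b ≤
        (2 * ((1 - ρ) * ((n : ℝ) + 1))) ^ (m + 1) := by
      rw [← Real.rpow_natCast]
      exact Real.rpow_le_rpow_of_exponent_le (by linarith) (by push_cast; exact hm)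
    calc ν ρ / ν (1 - 1 / ((n : ℝ) + 1)) * ρ ^ n / ((n : ℝ) + 1)
        ≤ C * (2 * ((1 - ρ) * ((n : ℝ) + 1))) ^ (m + 1) * ρ ^ n / ((n : ℝ) + 1) := by
          gcongr
          exact ((hdiv ρ hρ n).2 hx1).trans (by gcongr)
      _ = C * 2 ^ (m + 1) * ((1 - ρ) ^ (m + 1) * (((n : ℝ) + 1) ^ m * ρ ^ n)) := by
          rw [mul_pow, mul_pow, pow_succ ((n : ℝ) + 1) m]
          field_simp
      _ = _ := (zero_add _).symm

theorem IsNormal.exists_tsum_normalKernel_le {ν : ℝ → ℝ} {a b : ℝ} (hν : IsNormal ν a b) :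
    ∃ K, ∀ ρ ∈ Ico (0 : ℝ) 1,
      Summable (normalKernel ν ρ) ∧ ∑' n, normalKernel ν ρ n ≤ K := by
  set a' := min a 1
  have ha' : 0 < a' := lt_min hν.1 one_pos
  obtain ⟨m, hm⟩ := exists_nat_ge b
  obtain ⟨C, hC, hkernel⟩ := hν.exists_normalKernel_le (min_le_left a 1) (hm.trans (by linarith))
  refine ⟨C * 2 ^ a / a' + C * 2 ^ (m + 1) * m.factorial, fun ρ hρ => ?_⟩
  have hρ1 : 0 < 1 - ρ := by linarith [hρ.2]
  set N := ⌊1 / (1 - ρ)⌋₊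
  set D : ℕ → ℝ := fun n =>
    if n < N then C * 2 ^ a * ((1 - ρ) ^ a' * ((n : ℝ) + 1) ^ (a' - 1)) else 0
  have hD : HasSum D
      (∑ n ∈ Finset.range N, C * 2 ^ a * ((1 - ρ) ^ a' * ((n : ℝ) + 1) ^ (a' - 1))) := by
    rw [← Finset.sum_congr rfl fun n hn => if_pos (Finset.mem_range.1 hn)]
    exact hasSum_sum_of_ne_finset_zero fun n hn => if_neg (by simpa using hn)
  have hDle : ∑ n ∈ Finset.range N, C * 2 ^ a * ((1 - ρ) ^ a' * ((n : ℝ) + 1) ^ (a' - 1)) ≤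
      C * 2 ^ a / a' := by
    rw [← Finset.mul_sum, ← Finset.mul_sum, ← mul_one_div (C * 2 ^ a)]
    exact mul_le_mul_of_nonneg_left (rpow_mul_sum_range_floor_le ha' (min_le_right a 1) hρ1)
      (by positivity)
  obtain ⟨hE, hEle⟩ := tsum_add_one_pow_mul_geometric_le hρ.1 hρ.2 m
  have hE' := (hE.mul_left ((1 - ρ) ^ (m + 1))).mul_left (C * 2 ^ (m + 1))
  have hsum := (hD.summable.add hE').of_nonneg_of_le (normalKernel_nonneg hν.2.2.1 hρ)
    (hkernel ρ hρ)
  refine ⟨hsum, (hsum.tsum_le_tsum (hkernel ρ hρ) (hD.summable.add hE')).trans ?_⟩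
  rw [hD.summable.tsum_add hE', hD.tsum_eq, tsum_mul_left, tsum_mul_left]
  gcongr
  calc (1 - ρ) ^ (m + 1) * ∑' n : ℕ, ((n : ℝ) + 1) ^ m * ρ ^ n
      ≤ (1 - ρ) ^ (m + 1) * (m.factorial / (1 - ρ) ^ (m + 1)) := by gcongr
    _ = m.factorial := by field_simp

theorem IsNormal.exists_mul_tsum_le {ν : ℝ → ℝ} {a b : ℝ} (hν : IsNormal ν a b) :
    ∃ K, ∀ (c : ℕ → ℝ) (M : ℝ), (∀ n, 0 ≤ c n) →
      (∀ n : ℕ, ((n : ℝ) + 1) ^ 2 * ν (1 - 1 / ((n : ℝ) + 1)) * c (n + 1) ≤ M) →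
      ∀ ρ ∈ Ico (0 : ℝ) 1, ν ρ * ∑' n : ℕ, ((n : ℝ) + 1) * c (n + 1) * ρ ^ n ≤ K * M := by
  obtain ⟨K, hK⟩ := hν.exists_tsum_normalKernel_le
  refine ⟨K, fun c M hc hM ρ hρ => ?_⟩
  obtain ⟨hsum, hle⟩ := hK ρ hρ
  have hρn : ∀ n : ℕ, 0 ≤ ρ ^ n := fun n => pow_nonneg hρ.1 n
  have hterm : ∀ n : ℕ, ν ρ * (((n : ℝ) + 1) * c (n + 1) * ρ ^ n) ≤
      M * normalKernel ν ρ n := by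
    intro n
    have hw := hν.2.2.1 _ (one_sub_inv_add_one_mem_Ico n)
    calc ν ρ * (((n : ℝ) + 1) * c (n + 1) * ρ ^ n)
        = ((n : ℝ) + 1) ^ 2 * ν (1 - 1 / ((n : ℝ) + 1)) * c (n + 1) * normalKernel ν ρ n := by
          rw [normalKernel]
          generalize ν (1 - 1 / ((n : ℝ) + 1)) = w at hw ⊢
          field_simp
      _ ≤ M * normalKernel ν ρ n :=
          mul_le_mul_of_nonneg_right (hM n) (normalKernel_nonneg hν.2.2.1 hρ n)
  have hM0 : 0 ≤ M := le_trans (mul_nonneg (mul_nonneg (by positivity)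
    (hν.2.2.1 _ (one_sub_inv_add_one_mem_Ico 0)).le) (hc 1)) (hM 0)
  have hs := (hsum.mul_left M).of_nonneg_of_le (fun n => mul_nonneg (hν.2.2.1 ρ hρ).le
    (mul_nonneg (mul_nonneg (by positivity) (hc _)) (hρn n))) hterm
  calc ν ρ * ∑' n : ℕ, ((n : ℝ) + 1) * c (n + 1) * ρ ^ n
      = ∑' n : ℕ, ν ρ * (((n : ℝ) + 1) * c (n + 1) * ρ ^ n) := tsum_mul_left.symm
    _ ≤ ∑' n, M * normalKernel ν ρ n := hs.tsum_le_tsum hterm (hsum.mul_left M)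
    _ = M * ∑' n, normalKernel ν ρ n := tsum_mul_left
    _ ≤ K * M := by rw [mul_comm K]; gcongr

theorem hasSum_deriv_of_hasSum_pow {c : ℕ → ℂ} {B : ℝ} (hB : ∀ n, ‖c n‖ ≤ B) {f : ℂ → ℂ}
    (hf : ∀ z ∈ Metric.ball (0 : ℂ) 1, HasSum (fun n => c n * z ^ n) (f z))
    {z : ℂ} (hz : z ∈ Metric.ball (0 : ℂ) 1) :
    DifferentiableAt ℂ f z ∧
      HasSum (fun n : ℕ => ((n : ℂ) + 1) * c (n + 1) * z ^ n) (deriv f z) := by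
  have hz1 : ‖z‖ < 1 := mem_ball_zero_iff.1 hz
  set r := (‖z‖ + 1) / 2 with hr
  have hr1 : r < 1 := by rw [hr]; linarith
  have hzU : z ∈ Metric.ball (0 : ℂ) r := mem_ball_zero_iff.2 (by rw [hr]; linarith)
  have hu : Summable (fun n : ℕ => B * r ^ n) :=
    (summable_geometric_of_lt_one (by positivity) hr1).mul_left B
  have hF : ∀ (n : ℕ), ∀ w ∈ Metric.ball (0 : ℂ) r, ‖c n * w ^ n‖ ≤ B * r ^ n := by
    intro n w hw
    rw [norm_mul, norm_pow]
    exact mul_le_mul (hB n) (pow_le_pow_left₀ (norm_nonneg w) (mem_ball_zero_iff.1 hw).le n)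
      (by positivity) ((norm_nonneg _).trans (hB 0))
  have hdiff : ∀ n : ℕ, DifferentiableOn ℂ (fun w : ℂ => c n * w ^ n) (Metric.ball 0 r) :=
    fun n => (differentiable_id.pow n).const_mul (c n) |>.differentiableOn
  have heq : f =ᶠ[nhds z] fun w => ∑' n, c n * w ^ n :=
    Filter.eventuallyEq_of_mem (Metric.isOpen_ball.mem_nhds hzU) fun w hw =>
      (hf w (Metric.ball_subset_ball hr1.le hw)).tsum_eq.symm
  refine ⟨((Complex.differentiableOn_tsum_of_summable_norm hu hdiff Metric.isOpen_ball
    hF).differentiableAt (Metric.isOpen_ball.mem_nhds hzU)).congr_of_eventuallyEq heq, ?_⟩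
  have hterm : ∀ n : ℕ, deriv (fun w => c n * w ^ n) z = n * c n * z ^ (n - 1) := fun n => by
    simp only [deriv_const_mul_field', deriv_pow_field]
    ring
  have h := Complex.hasSum_deriv_of_summable_norm hu hdiff Metric.isOpen_ball hF hzU
  rw [← heq.deriv_eq, ← hasSum_nat_add_iff' 1] at h
  simp only [hterm, Finset.sum_range_one, CharP.cast_eq_zero, zero_mul, sub_zero, Nat.cast_succ,
    Nat.add_sub_cancel] at h
  exact h

section AntitoneCoefficients

variable {c : ℕ → ℝ}

lemma summable_succ_mul_coeff_mul_pow (hc : ∀ n, 0 ≤ c n) (hmono : Antitone c) {ρ : ℝ}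
    (hρ : ρ ∈ Ico (0 : ℝ) 1) : Summable (fun n : ℕ => ((n : ℝ) + 1) * c (n + 1) * ρ ^ n) := by
  refine ((tsum_add_one_pow_mul_geometric_le hρ.1 hρ.2 1).1.mul_left (c 0)).of_nonneg_of_le
    (fun n => mul_nonneg (mul_nonneg (by positivity) (hc _)) (pow_nonneg hρ.1 n)) fun n => ?_
  calc ((n : ℝ) + 1) * c (n + 1) * ρ ^ n = c (n + 1) * (((n : ℝ) + 1) ^ 1 * ρ ^ n) := by ring
    _ ≤ c 0 * (((n : ℝ) + 1) ^ 1 * ρ ^ n) := mul_le_mul_of_nonneg_right (hmono (Nat.zero_le _))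
        (mul_nonneg (by positivity) (pow_nonneg hρ.1 n))

lemma sq_mul_le_six_mul_tsum (hc : ∀ n, 0 ≤ c n) (hmono : Antitone c) (k : ℕ) :
    ((k : ℝ) + 1) ^ 2 * c (k + 1) ≤
      6 * ∑' n : ℕ, ((n : ℝ) + 1) * c (n + 1) * (1 - 1 / ((k : ℝ) + 1)) ^ n := by
  have hρ := one_sub_inv_add_one_mem_Ico k
  set ρ := 1 - 1 / ((k : ℝ) + 1)
  have hsum := summable_succ_mul_coeff_mul_pow hc hmono hρ
  have hpartial := hsum.sum_le_tsum (Finset.range (k + 1))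
    (fun n _ => mul_nonneg (mul_nonneg (by positivity) (hc _)) (pow_nonneg hρ.1 n))
  have hterm : ∀ n ∈ Finset.range (k + 1),
      ((n : ℝ) + 1) * (c (k + 1) * ρ ^ k) ≤ ((n : ℝ) + 1) * c (n + 1) * ρ ^ n := by
    intro n hn
    have hnk : n ≤ k := Nat.lt_succ_iff.1 (Finset.mem_range.1 hn)
    rw [mul_assoc]
    exact mul_le_mul_of_nonneg_left (mul_le_mul (hmono (Nat.succ_le_succ hnk))
      (pow_le_pow_of_le_one hρ.1 hρ.2.le hnk) (pow_nonneg hρ.1 k) (hc _)) (by positivity)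
  have hgauss : ∀ N : ℕ, ∑ n ∈ Finset.range N, ((n : ℝ) + 1) = N * (N + 1) / 2 := by
    intro N
    induction N with
    | zero => simp
    | succ N ih => rw [Finset.sum_range_succ, ih]; push_cast; ring
  have hlower := (Finset.sum_le_sum hterm).trans hpartial
  rw [← Finset.sum_mul, hgauss] at hlower
  have hρk : 1 / 3 ≤ ρ ^ k := inv_three_le_one_sub_inv_pow k
  have hck : 0 ≤ c (k + 1) * ρ ^ k := mul_nonneg (hc _) (pow_nonneg hρ.1 k)
  push_cast at hlower
  nlinarith [mul_le_mul_of_nonneg_left hρk (mul_nonneg (sq_nonneg ((k : ℝ) + 1)) (hc (k + 1))),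
    mul_nonneg hck (by positivity : (0 : ℝ) ≤ (k : ℝ) + 1)]

variable {f : ℂ → ℂ}

lemma hasSum_deriv_of_antitone (hc : ∀ n, 0 ≤ c n) (hmono : Antitone c)
    (hf : ∀ z ∈ Metric.ball (0 : ℂ) 1, HasSum (fun n : ℕ => (c n : ℂ) * z ^ n) (f z))
    {z : ℂ} (hz : z ∈ Metric.ball (0 : ℂ) 1) :
    DifferentiableAt ℂ f z ∧
      HasSum (fun n : ℕ => (((n : ℝ) + 1) * c (n + 1) : ℝ) * z ^ n) (deriv f z) := by
  have hB : ∀ n, ‖(c n : ℂ)‖ ≤ c 0 := fun n => by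
    rw [Complex.norm_real, Real.norm_of_nonneg (hc n)]
    exact hmono (Nat.zero_le n)
  obtain ⟨hdiff, hsum⟩ := hasSum_deriv_of_hasSum_pow hB hf hz
  exact ⟨hdiff, by exact_mod_cast hsum⟩

lemma norm_deriv_le_tsum (hc : ∀ n, 0 ≤ c n) (hmono : Antitone c)
    (hf : ∀ z ∈ Metric.ball (0 : ℂ) 1, HasSum (fun n : ℕ => (c n : ℂ) * z ^ n) (f z))
    {z : ℂ} (hz : z ∈ Metric.ball (0 : ℂ) 1) :
    ‖deriv f z‖ ≤ ∑' n : ℕ, ((n : ℝ) + 1) * c (n + 1) * ‖z‖ ^ n := by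
  have hsum := summable_succ_mul_coeff_mul_pow hc hmono ⟨norm_nonneg z, mem_ball_zero_iff.1 hz⟩
  refine (hasSum_deriv_of_antitone hc hmono hf hz).2.norm_le_of_bounded hsum.hasSum fun n => ?_
  rw [norm_mul, Complex.norm_real, norm_pow,
    Real.norm_of_nonneg (mul_nonneg (by positivity) (hc _))]

lemma deriv_ofReal_eq_tsum (hc : ∀ n, 0 ≤ c n) (hmono : Antitone c)
    (hf : ∀ z ∈ Metric.ball (0 : ℂ) 1, HasSum (fun n : ℕ => (c n : ℂ) * z ^ n) (f z))
    {ρ : ℝ} (hρ : ρ ∈ Ico (0 : ℝ) 1) :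
    deriv f ρ = ((∑' n : ℕ, ((n : ℝ) + 1) * c (n + 1) * ρ ^ n : ℝ) : ℂ) := by
  have hρ' : (ρ : ℂ) ∈ Metric.ball (0 : ℂ) 1 := by
    rw [mem_ball_zero_iff, Complex.norm_real, Real.norm_of_nonneg hρ.1]
    exact hρ.2
  refine (hasSum_deriv_of_antitone hc hmono hf hρ').2.unique ?_
  have h := Complex.hasSum_ofReal.2 (summable_succ_mul_coeff_mul_pow hc hmono hρ).hasSum
  exact_mod_cast h

lemma sq_mul_weight_mul_coeff_le_six_mul {ν : ℝ → ℝ} (hν : ∀ s ∈ Ico (0 : ℝ) 1, 0 < ν s)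
    (hc : ∀ n, 0 ≤ c n) (hmono : Antitone c)
    (hf : ∀ z ∈ Metric.ball (0 : ℂ) 1, HasSum (fun n : ℕ => (c n : ℂ) * z ^ n) (f z)) (k : ℕ) :
    ((k : ℝ) + 1) ^ 2 * ν (1 - 1 / ((k : ℝ) + 1)) * c (k + 1) ≤
      6 * (ν ‖((1 - 1 / ((k : ℝ) + 1) : ℝ) : ℂ)‖ *
        ‖deriv f ((1 - 1 / ((k : ℝ) + 1) : ℝ) : ℂ)‖) := by
  have hρ := one_sub_inv_add_one_mem_Ico k
  rw [deriv_ofReal_eq_tsum hc hmono hf hρ, Complex.norm_real, Complex.norm_real,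
    Real.norm_of_nonneg hρ.1, Real.norm_of_nonneg (tsum_nonneg fun n =>
      mul_nonneg (mul_nonneg (by positivity) (hc _)) (pow_nonneg hρ.1 n))]
  have := sq_mul_le_six_mul_tsum hc hmono k
  have := (hν _ hρ).le
  nlinarith

end AntitoneCoefficients

theorem IsNormal.exists_mul_norm_deriv_le {ν : ℝ → ℝ} {a b : ℝ} (hν : IsNormal ν a b) :
    ∃ K, ∀ (f : ℂ → ℂ) (c : ℕ → ℝ), (∀ n, 0 ≤ c n) → Antitone c →
      (∀ z ∈ Metric.ball (0 : ℂ) 1, HasSum (fun n : ℕ => (c n : ℂ) * z ^ n) (f z)) → ∀ M : ℝ,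
      (∀ n : ℕ, ((n : ℝ) + 1) ^ 2 * ν (1 - 1 / ((n : ℝ) + 1)) * c (n + 1) ≤ M) →
      ∀ z ∈ Metric.ball (0 : ℂ) 1, ν ‖z‖ * ‖deriv f z‖ ≤ K * M := by
  obtain ⟨K, hK⟩ := hν.exists_mul_tsum_le
  refine ⟨K, fun f c hc hmono hf M hM z hz => ?_⟩
  have hz' : ‖z‖ ∈ Ico (0 : ℝ) 1 := ⟨norm_nonneg z, mem_ball_zero_iff.1 hz⟩
  calc ν ‖z‖ * ‖deriv f z‖
      ≤ ν ‖z‖ * ∑' n : ℕ, ((n : ℝ) + 1) * c (n + 1) * ‖z‖ ^ n :=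
        mul_le_mul_of_nonneg_left (norm_deriv_le_tsum hc hmono hf hz) (hν.2.2.1 _ hz').le
    _ ≤ K * M := hK c M hc hM _ hz'

lemma ofReal_one_sub_inv_add_one_mem_ball (n : ℕ) :
    ((1 - 1 / ((n : ℝ) + 1) : ℝ) : ℂ) ∈ Metric.ball (0 : ℂ) 1 := by
  rw [mem_ball_zero_iff, Complex.norm_real, Real.norm_of_nonneg (one_sub_inv_add_one_mem_Ico n).1]
  exact (one_sub_inv_add_one_mem_Ico n).2

theorem IsNormal.memBloch_iff_bddAbove {ν : ℝ → ℝ} {a b : ℝ} (hν : IsNormal ν a b) {f : ℂ → ℂ}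
    {c : ℕ → ℝ} (hc : ∀ n, 0 ≤ c n) (hmono : Antitone c)
    (hf : ∀ z ∈ Metric.ball (0 : ℂ) 1, HasSum (fun n : ℕ => (c n : ℂ) * z ^ n) (f z)) :
    MemBloch ν f ↔ BddAbove
      (Set.range fun n : ℕ => ((n : ℝ) + 1) ^ 2 * ν (1 - 1 / ((n : ℝ) + 1)) * c (n + 1)) := by
  obtain ⟨K, hK⟩ := hν.exists_mul_norm_deriv_le
  refine ⟨fun ⟨_, M, hM⟩ => ⟨6 * M, ?_⟩, fun ⟨M, hM⟩ => ⟨fun z hz => ?_, K * M, ?_⟩⟩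
  · rintro _ ⟨n, rfl⟩
    refine (sq_mul_weight_mul_coeff_le_six_mul hν.2.2.1 hc hmono hf n).trans ?_
    gcongr
    exact hM ⟨⟨_, ofReal_one_sub_inv_add_one_mem_ball n⟩, rfl⟩
  · exact (hasSum_deriv_of_antitone hc hmono hf hz).1.differentiableWithinAt
  · rintro _ ⟨z, rfl⟩
    exact hK f c hc hmono hf M (fun n => hM ⟨n, rfl⟩) z z.2

lemma blochNorm_eq_add_iSup {ν : ℝ → ℝ} {f : ℂ → ℂ} {c : ℕ → ℝ} (hc : 0 ≤ c 0)
    (hf : HasSum (fun n : ℕ => (c n : ℂ) * 0 ^ n) (f 0)) :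
    blochNorm ν f = c 0 + ⨆ z : Metric.ball (0 : ℂ) 1, ν ‖(z : ℂ)‖ * ‖deriv f z‖ := by
  have h0 := hasSum_single (f := fun n : ℕ => (c n : ℂ) * 0 ^ n) 0 fun n hn => by simp [hn]
  rw [blochNorm, hf.unique h0, pow_zero, mul_one, Complex.norm_real, Real.norm_of_nonneg hc]

lemma exists_forall_one_le_le_iff_bddAbove {u : ℕ → ℝ} :
    (∃ M, ∀ n, 1 ≤ n → u n ≤ M) ↔ BddAbove (Set.range fun k => u (k + 1)) := by
  refine ⟨fun ⟨M, hM⟩ => ⟨M, ?_⟩, fun ⟨M, hM⟩ => ⟨M, fun n hn => ?_⟩⟩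
  · rintro _ ⟨k, rfl⟩
    exact hM (k + 1) (Nat.le_add_left 1 k)
  · obtain ⟨k, rfl⟩ := Nat.exists_eq_add_of_le' hn
    exact hM ⟨k, rfl⟩

theorem stmt7 (ν : ℝ → ℝ) (a b : ℝ) (hν : IsNormal ν a b) :
    ∃ C > 0, ∀ (f : ℂ → ℂ) (c : ℕ → ℝ), (∀ n, 0 ≤ c n) → (Antitone c) →
      (∀ z ∈ Metric.ball (0:ℂ) 1, HasSum (fun n : ℕ => (c n : ℂ) * z ^ n) (f z)) →
      ((MemBloch ν f ↔
          ∃ M : ℝ, ∀ n : ℕ, 1 ≤ n → (n : ℝ) ^ 2 * ν (1 - 1 / (n:ℝ)) * c n ≤ M)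
        ∧ (MemBloch ν f →
            blochNorm ν f ≤
              C * (c 0 + ⨆ n : ℕ, ((n:ℝ) + 1) ^ 2 * ν (1 - 1 / ((n:ℝ) + 1)) * c (n + 1))
            ∧ c 0 + (⨆ n : ℕ, ((n:ℝ) + 1) ^ 2 * ν (1 - 1 / ((n:ℝ) + 1)) * c (n + 1)) ≤
                C * blochNorm ν f)) := by
  obtain ⟨K, hK⟩ := hν.exists_mul_norm_deriv_le
  refine ⟨max K 6, by positivity, fun f c hc hmono hf => ?_⟩
  set w : ℕ → ℝ := fun n => ((n : ℝ) + 1) ^ 2 * ν (1 - 1 / ((n : ℝ) + 1)) * c (n + 1)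
  set g : Metric.ball (0 : ℂ) 1 → ℝ := fun z => ν ‖(z : ℂ)‖ * ‖deriv f z‖
  have hmem := hν.memBloch_iff_bddAbove hc hmono hf
  have hshift := exists_forall_one_le_le_iff_bddAbove
    (u := fun n : ℕ => (n : ℝ) ^ 2 * ν (1 - 1 / (n : ℝ)) * c n)
  push_cast at hshift
  refine ⟨hmem.trans hshift.symm, fun hB => ?_⟩
  have : Nonempty (Metric.ball (0 : ℂ) 1) := ⟨⟨0, Metric.mem_ball_self one_pos⟩⟩
  have hgw : ⨆ z, g z ≤ K * ⨆ n, w n :=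
    ciSup_le fun z => hK f c hc hmono hf _ (le_ciSup (hmem.1 hB)) z z.2
  have hwg : ⨆ n, w n ≤ 6 * ⨆ z, g z := ciSup_le fun n =>
    (sq_mul_weight_mul_coeff_le_six_mul hν.2.2.1 hc hmono hf n).trans
      (by gcongr; exact le_ciSup hB.2 ⟨_, ofReal_one_sub_inv_add_one_mem_ball n⟩)
  have hg0 : 0 ≤ ⨆ z, g z := Real.iSup_nonneg fun z =>
    mul_nonneg (hν.2.2.1 _ ⟨norm_nonneg _, mem_ball_zero_iff.1 z.2⟩).le (norm_nonneg _)
  have hw0 : 0 ≤ ⨆ n, w n := Real.iSup_nonneg fun n => mul_nonneg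
    (mul_nonneg (by positivity) (hν.2.2.1 _ (one_sub_inv_add_one_mem_Ico n)).le) (hc _)
  rw [blochNorm_eq_add_iSup (hc 0) (hf 0 (Metric.mem_ball_self one_pos))]
  have hK6 := le_max_left K 6
  have h6 := le_max_right K 6
  constructor <;> nlinarith [hc 0]
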